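/- For every n ≥ 1, the generalized quaternion group Q(n) has trivial Schur multiplier; that is, the second group homology of Q(n) with trivial integer coefficients, H₂(Q(n), ℤ), is trivial. -/

import Mathlib

/-!
Via Hopf's formula it suffices that the kernel of the central extension `F ⧸ ⁅R, F⁆ → Q(n)` meets
its commutator subgroup trivially, and this holds for every central extension `π : E → Q(n)`.
A commutator in a central extension depends only on the images of its entries. Lifting `a 1`
and `xa 0` to `e` and `f` and putting `c = ⁅e, f⁆`, this shows that `c` commutes with `e`, that
conjugation by `f` sends `e ^ k` to `c ^ (-k) * e ^ k`, and that every commutator is a power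
of `c`. As `f ^ 2` and `e ^ n` have the same image, `f` commutes with `e ^ n`, which forces
`c ^ n = 1`; on the other hand `π (c ^ k) = a (2 * k)` is trivial only when `n ∣ k`.
-/

open scoped commutatorElement
open Subgroup

theorem commutatorElement_eq_of_ker_le_center {E G : Type*} [Group E] [Group G]
    {π : E →* G} (hc : π.ker ≤ center E) {g g' h h' : E}
    (hg : π g = π g') (hh : π h = π h') : ⁅g, h⁆ = ⁅g', h'⁆ := by
  obtain ⟨z, hz, rfl⟩ : ∃ z ∈ center E, g = g' * z :=
    ⟨g'⁻¹ * g, hc (by simp [hg]), by group⟩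
  obtain ⟨w, hw, rfl⟩ : ∃ w ∈ center E, h = h' * w :=
    ⟨h'⁻¹ * h, hc (by simp [hh]), by group⟩
  rw [mem_center_iff] at hz hw
  simp only [commutatorElement_def, mul_inv_rev]
  calc g' * z * (h' * w) * (z⁻¹ * g'⁻¹) * (w⁻¹ * h'⁻¹)
      = g' * h' * (w * g'⁻¹) * w⁻¹ * h'⁻¹ := by rw [mul_assoc g' z, ← hz]; group
    _ = g' * h' * g'⁻¹ * h'⁻¹ := by rw [← hw]; group

namespace QuaternionGroup

variable {n : ℕ}

theorem inv_a (i : ZMod (2 * n)) : (a i : QuaternionGroup n)⁻¹ = a (-i) := rfl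

theorem inv_xa (i : ZMod (2 * n)) :
    (xa i : QuaternionGroup n)⁻¹ = xa ((n : ZMod (2 * n)) + i) :=
  rfl

theorem a_one_zpow (k : ℤ) : (a 1 : QuaternionGroup n) ^ k = a k := by
  cases k with
  | ofNat k => simp [a_one_pow]
  | negSucc k => rw [zpow_negSucc, a_one_pow, inv_a, Int.cast_negSucc]

variable {E : Type*} [Group E] {π : E →* QuaternionGroup n} {e f : E}

theorem map_commutatorElement_eq_sq (he : π e = a 1) (hf : π f = xa 0) :
    π ⁅e, f⁆ = π e ^ 2 := by
  have h2m : (2 * n : ZMod (2 * n)) = 0 := by exact_mod_cast ZMod.natCast_self (2 * n)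
  rw [map_commutatorElement, he, hf, commutatorElement_def, sq]
  simp only [a_mul_xa, xa_mul_a, inv_a, inv_xa, xa_mul_xa, a_mul_a]
  congr 1
  linear_combination h2m

theorem commute_commutatorElement (hc : π.ker ≤ center E) (he : π e = a 1) (hf : π f = xa 0) :
    Commute e ⁅e, f⁆ := by
  have hsq : π ⁅e, f⁆ = π (e ^ 2) := by rw [map_pow, map_commutatorElement_eq_sq he hf]
  rw [← commutatorElement_eq_one_iff_commute, commutatorElement_eq_of_ker_le_center hc rfl hsq,
    commutatorElement_eq_one_iff_commute]
  exact Commute.self_pow e 2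

theorem conj_zpow_eq_commutatorElement_zpow_mul (hc : π.ker ≤ center E) (he : π e = a 1)
    (hf : π f = xa 0) (k : ℤ) :
    f * e ^ k * f⁻¹ = ⁅e, f⁆ ^ (-k) * e ^ k := by
  have hconj : f * e * f⁻¹ = ⁅e, f⁆⁻¹ * e := by rw [commutatorElement_def]; group
  rw [← conj_zpow, hconj, (commute_commutatorElement hc he hf).symm.inv_left.mul_zpow, inv_zpow']

theorem commutatorElement_pow_eq_one (hc : π.ker ≤ center E) (he : π e = a 1)
    (hf : π f = xa 0) : ⁅e, f⁆ ^ n = 1 := by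
  have hsq : π (e ^ (n : ℤ)) = π (f ^ 2) := by
    rw [map_zpow, map_pow, he, hf, a_one_zpow, xa_sq, Int.cast_natCast]
  have hcomm : ⁅f, e ^ (n : ℤ)⁆ = 1 := by
    rw [commutatorElement_eq_of_ker_le_center hc rfl hsq, commutatorElement_eq_one_iff_commute]
    exact Commute.self_pow f 2
  rw [commutatorElement_def, conj_zpow_eq_commutatorElement_zpow_mul hc he hf,
    mul_inv_cancel_right, zpow_neg, inv_eq_one, zpow_natCast] at hcomm
  exact hcomm

theorem exists_zpow_map_eq (he : π e = a 1) (hf : π f = xa 0) (p : QuaternionGroup n) :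
    ∃ k : ℤ, π (e ^ k) = p ∨ π (e ^ k * f) = p := by
  rcases p with i | i
  · exact ⟨(i.cast : ℤ), Or.inl (by rw [map_zpow, he, a_one_zpow, ZMod.intCast_zmod_cast])⟩
  · refine ⟨-(i.cast : ℤ), Or.inr ?_⟩
    rw [map_mul, map_zpow, he, hf, a_one_zpow, a_mul_xa, Int.cast_neg, ZMod.intCast_zmod_cast,
      zero_sub, neg_neg]

theorem commutatorElement_zpow_zpow_mul (hc : π.ker ≤ center E) (he : π e = a 1)
    (hf : π f = xa 0) (j k : ℤ) : ⁅e ^ j, e ^ k * f⁆ = ⁅e, f⁆ ^ j := by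
  calc ⁅e ^ j, e ^ k * f⁆ = e ^ (j + k) * (f * e ^ (-j) * f⁻¹) * e ^ (-k) := by
        rw [commutatorElement_def]; group
    _ = e ^ (j + k) * ⁅e, f⁆ ^ j * e ^ (-j) * e ^ (-k) := by
        rw [conj_zpow_eq_commutatorElement_zpow_mul hc he hf, neg_neg]; group
    _ = ⁅e, f⁆ ^ j := by
        rw [((commute_commutatorElement hc he hf).zpow_zpow (j + k) j).eq]; group

theorem commutatorElement_zpow_mul_zpow_mul (hc : π.ker ≤ center E) (he : π e = a 1)
    (hf : π f = xa 0) (j k : ℤ) : ⁅e ^ j * f, e ^ k * f⁆ = ⁅e, f⁆ ^ (j - k) := by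
  calc ⁅e ^ j * f, e ^ k * f⁆ = e ^ j * (f * e ^ (k - j) * f⁻¹) * e ^ (-k) := by
        rw [commutatorElement_def]; group
    _ = e ^ j * ⁅e, f⁆ ^ (j - k) * e ^ (k - j) * e ^ (-k) := by
        rw [conj_zpow_eq_commutatorElement_zpow_mul hc he hf, neg_sub]; group
    _ = ⁅e, f⁆ ^ (j - k) := by
        rw [((commute_commutatorElement hc he hf).zpow_zpow j (j - k)).eq]; group

theorem commutator_le_zpowers (hc : π.ker ≤ center E) (he : π e = a 1) (hf : π f = xa 0) :
    commutator E ≤ zpowers ⁅e, f⁆ := by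
  rw [commutator_def, commutator_le]
  rintro g - h -
  obtain ⟨j, hj⟩ := exists_zpow_map_eq he hf (π g)
  obtain ⟨k, hk⟩ := exists_zpow_map_eq he hf (π h)
  rcases hj with hj | hj <;> rcases hk with hk | hk <;>
    rw [commutatorElement_eq_of_ker_le_center hc hj.symm hk.symm]
  · rw [commutatorElement_eq_one_iff_commute.mpr (Commute.zpow_zpow_self e j k)]
    exact one_mem _
  · rw [commutatorElement_zpow_zpow_mul hc he hf]
    exact ⟨j, rfl⟩
  · refine mem_zpowers_iff.mpr ⟨-k, ?_⟩
    rw [zpow_neg, ← commutatorElement_zpow_zpow_mul hc he hf k j, commutatorElement_inv]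
  · rw [commutatorElement_zpow_mul_zpow_mul hc he hf]
    exact ⟨j - k, rfl⟩

theorem ker_inf_zpowers_eq_bot (hc : π.ker ≤ center E) (he : π e = a 1) (hf : π f = xa 0) :
    π.ker ⊓ zpowers ⁅e, f⁆ = ⊥ := by
  rw [eq_bot_iff]
  intro x hx
  obtain ⟨hker, hx⟩ := mem_inf.mp hx
  obtain ⟨k, rfl⟩ := mem_zpowers_iff.mp hx
  have h2k : ((2 * k : ℤ) : ZMod (2 * n)) = 0 := by
    rw [MonoidHom.mem_ker, map_zpow, map_commutatorElement_eq_sq he hf, he, ← zpow_natCast,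
      ← zpow_mul, a_one_zpow, one_def] at hker
    exact a.inj hker
  obtain ⟨t, rfl⟩ : (n : ℤ) ∣ k := by
    rw [ZMod.intCast_zmod_eq_zero_iff_dvd, Nat.cast_mul, Nat.cast_two] at h2k
    exact (mul_dvd_mul_iff_left two_ne_zero).mp h2k
  rw [mem_bot, zpow_mul, zpow_natCast, commutatorElement_pow_eq_one hc he hf, one_zpow]

theorem ker_inf_commutator_eq_bot (hπ : Function.Surjective π) (hc : π.ker ≤ center E) :
    π.ker ⊓ commutator E = ⊥ := by
  obtain ⟨e, he⟩ := hπ (a 1)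
  obtain ⟨f, hf⟩ := hπ (xa 0)
  exact eq_bot_mono (inf_le_inf_left _ (commutator_le_zpowers hc he hf))
    (ker_inf_zpowers_eq_bot hc he hf)

end QuaternionGroup

namespace QuotientGroup

variable {F G : Type*} [Group F] [Group G]

theorem ker_lift_commutator_top_le_center (φ : F →* G) :
    (lift ⁅φ.ker, ⊤⁆ φ (commutator_le_left _ _)).ker ≤
      center (F ⧸ ⁅φ.ker, (⊤ : Subgroup F)⁆) := by
  rw [ker_lift, ← commutator_top_right_eq_bot_iff_le_center,
    ← map_top_of_surjective _ (mk'_surjective _), ← map_commutator, Subgroup.map_eq_bot_iff,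
    ker_mk']

theorem ker_inf_commutator_le_of_ker_lift_inf_commutator_eq_bot {N : Subgroup F} [N.Normal]
    (φ : F →* G) (hN : N ≤ φ.ker) (h : (lift N φ hN).ker ⊓ commutator (F ⧸ N) = ⊥) :
    φ.ker ⊓ commutator F ≤ N := by
  intro x hx
  obtain ⟨hx, hx'⟩ := mem_inf.mp hx
  rw [← eq_one_iff, ← mem_bot, ← h]
  refine mem_inf.mpr ⟨by rwa [MonoidHom.mem_ker, lift_mk], ?_⟩
  have hmap := mem_map_of_mem (mk' N) hx'
  rw [_root_.commutator_def, map_commutator] at hmap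
  exact commutator_mono le_top le_top hmap

end QuotientGroup

theorem schur_multiplier_quaternion_trivial_general (n : ℕ) :
    ∀ (α : Type) (φ : FreeGroup α →* QuaternionGroup (2 ^ n)),
      Function.Surjective φ →
        φ.ker ⊓ commutator (FreeGroup α) ≤ ⁅φ.ker, (⊤ : Subgroup (FreeGroup α))⁆ := by
  intro α φ hφ
  exact QuotientGroup.ker_inf_commutator_le_of_ker_lift_inf_commutator_eq_bot φ _
    (QuaternionGroup.ker_inf_commutator_eq_bot
      (QuotientGroup.lift_surjective_of_surjective _ φ hφ _)
      (QuotientGroup.ker_lift_commutator_top_le_center φ))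

/-- For every `n ≥ 1`, the generalized quaternion group `Q(n)`
(`QuaternionGroup (2^n)` in Mathlib) has trivial Schur multiplier `H₂(Q(n), ℤ)`.

Since group homology is not available, we state this via Hopf's formula: for a group `G` with a
free presentation `G ≅ F/R` (here `F = FreeGroup α` and `R = ker φ` for a surjection
`φ : F → G`), the Schur multiplier is `H₂(G, ℤ) ≅ (R ∩ [F, F]) / [R, F]`; it is trivial iff
`R ∩ [F, F] ≤ [R, F]` (the reverse inclusion always holds). -/
theorem schur_multiplier_quaternion_trivial (n : ℕ) (hn : 1 ≤ n) :
    ∀ (α : Type) (φ : FreeGroup α →* QuaternionGroup (2 ^ n)),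
      Function.Surjective φ →
        φ.ker ⊓ commutator (FreeGroup α) ≤ ⁅φ.ker, (⊤ : Subgroup (FreeGroup α))⁆ :=
  schur_multiplier_quaternion_trivial_general n
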